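/- arXiv:2504.17284 — 3 statements merged into one kernel-verified Lean document; each statement's English description precedes it below -/
import Mathlib

section
/- For all integers k ≥ 2, integers p ≥ 1, q ≥ 0, and variables x ≠ y, applying the differential operator 𝒟_{k−1} to the function F(x) = −1/(p^{k−1}(px+q)) (in the first variable, evaluated as a two-variable function of (x,y)) yields (p(x−y)/((px+q)(py+q)))^k. That is, −𝒟_{k−1}(x ↦ 1/(p^{k−1}(px+q)))(x,y) = (p(x−y)/((px+q)(py+q)))^k. -/
/-!
Writing `1 / (p ^ (k - 1) * (p * z + q)) = p⁻ᵏ (z - z₀)⁻¹` with `z₀ = -q / p` reduces the claim to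
`F = (z - z₀)⁻¹`, whose Taylor coefficients are geometric: the `i`-th term of `𝒟ₙ F (x, y)` is
`-C(2n-i, n) (aⁱ⁺¹ + bⁱ⁺¹) / (y - x)ⁿ⁺¹` with `a = (x - y)/(x - z₀)`, `b = (y - x)/(y - z₀)`, and
`a + b = a b`. For such `a, b` the sum is `(a b)ⁿ⁺¹`: with `s = a⁻¹`, `t = b⁻¹` (so `s + t = 1`)
this is `sⁿ⁺¹ ∑_{j ≤ n} C(n+j, j) tʲ + tⁿ⁺¹ ∑_{j ≤ n} C(n+j, j) sʲ = 1`, the two players' winning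
probabilities in a best-of-`2n+1` series, which follows by induction from Pascal's rule.
-/

open MeasureTheory Set

/-- The Vlasenko–Zagier differential operator `𝒟ₙ`. -/
noncomputable def Dop (n : ℕ) (F : ℂ → ℂ) (x y : ℂ) : ℂ :=
  ∑ i ∈ Finset.range (n + 1),
    (Nat.choose (2 * n - i) n : ℂ) * (iteratedDeriv i F x - (-1) ^ i * iteratedDeriv i F y) /
      ((Nat.factorial i : ℂ) * (y - x) ^ (n - i))

open Finset

section ChooseSums

variable {R : Type*} [CommRing R]

theorem one_sub_mul_sum_range_choose_succ (n : ℕ) (t : R) :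
    (1 - t) * ∑ j ∈ range (n + 2), ((n + 1 + j).choose j : R) * t ^ j =
      ∑ j ∈ range (n + 1), ((n + j).choose j : R) * t ^ j +
        ((2 * n + 1).choose (n + 1) : R) * t ^ (n + 1) * (1 - 2 * t) := by
  have pascal (j : ℕ) : ((n + 1 + (j + 1)).choose (j + 1) : R) * t ^ (j + 1) =
      t * ((n + 1 + j).choose j * t ^ j) + (n + (j + 1)).choose (j + 1) * t ^ (j + 1) := by
    rw [show n + 1 + (j + 1) = n + 1 + j + 1 by omega, show n + (j + 1) = n + 1 + j by omega,
      Nat.choose_succ_succ', Nat.cast_add]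
    ring
  have central : ((n + 1 + (n + 1)).choose (n + 1) : R) = 2 * (2 * n + 1).choose (n + 1) := by
    rw [show n + 1 + (n + 1) = 2 * n + 1 + 1 by omega, Nat.choose_succ_succ', Nat.choose_symm_half]
    push_cast
    ring
  have shift_G := sum_range_succ' (fun j => ((n + 1 + j).choose j : R) * t ^ j) (n + 1)
  have shift_g := sum_range_succ' (fun j => ((n + j).choose j : R) * t ^ j) (n + 1)
  rw [sum_congr rfl fun j _ => pascal j, sum_add_distrib, ← mul_sum, sum_range_succ _ (n + 1),
    central] at shift_G
  rw [sum_range_succ, show n + (n + 1) = 2 * n + 1 by omega] at shift_g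
  rw [sum_range_succ, central]
  simp only [add_zero, Nat.choose_zero_right, pow_zero] at shift_G shift_g
  linear_combination shift_G - shift_g

theorem pow_mul_sum_range_choose_add_pow_mul_sum_range_choose {s t : R} (h : s + t = 1) (n : ℕ) :
    s ^ (n + 1) * ∑ j ∈ range (n + 1), ((n + j).choose j : R) * t ^ j +
      t ^ (n + 1) * ∑ j ∈ range (n + 1), ((n + j).choose j : R) * s ^ j = 1 := by
  induction n with
  | zero => simpa using h
  | succ n ih =>
    have rec_t := one_sub_mul_sum_range_choose_succ n t
    have rec_s := one_sub_mul_sum_range_choose_succ n s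
    rw [← h, add_sub_cancel_right] at rec_t
    rw [← h, add_sub_cancel_left] at rec_s
    linear_combination s ^ (n + 1) * rec_t + t ^ (n + 1) * rec_s + ih

end ChooseSums

theorem sum_range_choose_two_mul_sub_mul_pow_add_pow {K : Type*} [Field K] {a b : K}
    (ha : a ≠ 0) (hb : b ≠ 0) (h : a + b = a * b) (n : ℕ) :
    ∑ i ∈ range (n + 1), ((2 * n - i).choose n : K) * (a ^ (i + 1) + b ^ (i + 1)) =
      (a * b) ^ (n + 1) := by
  have hinv : a⁻¹ + b⁻¹ = 1 := by
    field_simp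
    linear_combination h
  calc ∑ i ∈ range (n + 1), ((2 * n - i).choose n : K) * (a ^ (i + 1) + b ^ (i + 1))
      = ∑ j ∈ range (n + 1),
          ((2 * n - (n - j)).choose n : K) * (a ^ (n - j + 1) + b ^ (n - j + 1)) := by
        rw [← sum_range_reflect]
        simp
    _ = (a * b) ^ (n + 1) *
          (a⁻¹ ^ (n + 1) * ∑ j ∈ range (n + 1), ((n + j).choose j : K) * b⁻¹ ^ j +
            b⁻¹ ^ (n + 1) * ∑ j ∈ range (n + 1), ((n + j).choose j : K) * a⁻¹ ^ j) := by
        simp only [mul_sum, ← sum_add_distrib]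
        refine sum_congr rfl fun j hj => ?_
        obtain ⟨m, rfl⟩ : ∃ m, n = j + m := ⟨n - j, by simp at hj; omega⟩
        rw [show 2 * (j + m) - (j + m - j) = j + m + j by omega, Nat.choose_symm_add,
          show j + m - j = m by omega]
        simp only [inv_pow]
        field_simp
        ring
    _ = (a * b) ^ (n + 1) := by
        rw [pow_mul_sum_range_choose_add_pow_mul_sum_range_choose hinv, mul_one]

theorem iteratedDeriv_inv_sub {𝕜 : Type*} [NontriviallyNormedField 𝕜] (i : ℕ) (z₀ z : 𝕜) :
    iteratedDeriv i (fun z => (z - z₀)⁻¹) z = (-1) ^ i * i.factorial * ((z - z₀) ^ (i + 1))⁻¹ := by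
  rw [iteratedDeriv_comp_sub_const, iteratedDeriv_eq_iterate]
  dsimp only
  rw [iter_deriv_inv, show (-1 - i : ℤ) = -((i + 1 : ℕ) : ℤ) by push_cast; ring, zpow_neg,
    zpow_natCast]

theorem Dop_const_mul (n : ℕ) (c : ℂ) (F : ℂ → ℂ) (x y : ℂ) :
    Dop n (fun z => c * F z) x y = c * Dop n F x y := by
  simp only [Dop, iteratedDeriv_const_mul_field, mul_sum]
  exact sum_congr rfl fun i _ => by ring

theorem Dop_inv_sub (n : ℕ) {z₀ x y : ℂ} (hxy : x ≠ y) (hx : x ≠ z₀) (hy : y ≠ z₀) :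
    Dop n (fun z => (z - z₀)⁻¹) x y = -((x - y) / ((x - z₀) * (y - z₀))) ^ (n + 1) := by
  have hw : y - x ≠ 0 := sub_ne_zero.mpr hxy.symm
  have hα : x - z₀ ≠ 0 := sub_ne_zero.mpr hx
  have hβ : y - z₀ ≠ 0 := sub_ne_zero.mpr hy
  set a := -(y - x) / (x - z₀)
  set b := (y - x) / (y - z₀)
  have hab : a + b = a * b := by
    simp only [a, b]
    field_simp
    ring
  have term_eq (i : ℕ) (hi : i ≤ n) :
      ((-1) ^ i * i.factorial * ((x - z₀) ^ (i + 1))⁻¹ -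
          (-1) ^ i * ((-1) ^ i * i.factorial * ((y - z₀) ^ (i + 1))⁻¹)) /
        (i.factorial * (y - x) ^ (n - i)) =
      -(a ^ (i + 1) + b ^ (i + 1)) / (y - x) ^ (n + 1) := by
    obtain ⟨m, rfl⟩ : ∃ m, n = i + m := ⟨n - i, by omega⟩
    have hsq : ((-1 : ℂ) ^ i) * (-1) ^ i = 1 := by rw [← mul_pow]; simp
    have hfact : (i.factorial : ℂ) ≠ 0 := Nat.cast_ne_zero.mpr i.factorial_ne_zero
    rw [show i + m - i = m by omega]
    simp only [← mul_assoc, hsq, one_mul]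
    simp only [a, b, neg_div, neg_pow (_ / _), div_pow]
    field_simp
    ring
  have ha : a ≠ 0 := div_ne_zero (neg_ne_zero.mpr hw) hα
  have hb : b ≠ 0 := div_ne_zero hw hβ
  calc Dop n (fun z => (z - z₀)⁻¹) x y
      = ∑ i ∈ range (n + 1),
          ((2 * n - i).choose n : ℂ) * (-(a ^ (i + 1) + b ^ (i + 1)) / (y - x) ^ (n + 1)) := by
        refine sum_congr rfl fun i hi => ?_
        rw [iteratedDeriv_inv_sub, iteratedDeriv_inv_sub, mul_div_assoc,
          term_eq i (Nat.lt_succ_iff.mp (mem_range.mp hi))]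
    _ = -(a * b) ^ (n + 1) / (y - x) ^ (n + 1) := by
        rw [← sum_range_choose_two_mul_sub_mul_pow_add_pow ha hb hab, neg_div, sum_div,
          ← sum_neg_distrib]
        simp only [mul_div_assoc, neg_div, mul_neg]
    _ = -((x - y) / ((x - z₀) * (y - z₀))) ^ (n + 1) := by
        rw [neg_div, ← div_pow]
        congr 2
        simp only [a, b]
        field_simp
        ring

theorem Dop_of_reciprocal (k p : ℕ) (hk : 2 ≤ k) (hp : 1 ≤ p) (q : ℕ) (x y : ℂ) (hxy : x ≠ y)
    (hx : (p : ℂ) * x + q ≠ 0) (hy : (p : ℂ) * y + q ≠ 0) :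
    -(Dop (k - 1) (fun z => 1 / ((p : ℂ) ^ (k - 1) * ((p : ℂ) * z + q))) x y) =
      (((p : ℂ) * (x - y)) / (((p : ℂ) * x + q) * ((p : ℂ) * y + q))) ^ k := by
  obtain ⟨n, rfl⟩ : ∃ n, k = n + 1 := ⟨k - 1, by omega⟩
  have hP : (p : ℂ) ≠ 0 := Nat.cast_ne_zero.mpr (by omega)
  set z₀ : ℂ := -(q : ℂ) / p
  have hshift (z : ℂ) : z - z₀ = ((p : ℂ) * z + q) / p := by
    simp only [z₀]
    field_simp
    ring
  have hx₀ : x ≠ z₀ := sub_ne_zero.mp (hshift x ▸ div_ne_zero hx hP)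
  have hy₀ : y ≠ z₀ := sub_ne_zero.mp (hshift y ▸ div_ne_zero hy hP)
  have hF : (fun z => 1 / ((p : ℂ) ^ n * ((p : ℂ) * z + q))) =
      fun z => ((p : ℂ) ^ (n + 1))⁻¹ * (z - z₀)⁻¹ := by
    funext z
    rw [hshift]
    field_simp
    ring
  rw [Nat.add_sub_cancel, hF, Dop_const_mul, Dop_inv_sub n hxy hx₀ hy₀, hshift, hshift,
    mul_neg, neg_neg, ← inv_pow, ← mul_pow]
  congr 1
  field_simp
end

section
/- For Re(x) > 0, the function 𝓙₁(x) := J₁(x) + log 2 satisfies the two-term functional equation 𝓙₁(x) − (1/x)·𝓙₁(1/x) = 0. -/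
open MeasureTheory Set

noncomputable def digammaC (x : ℂ) : ℂ := deriv Complex.Gamma x / Complex.Gamma x

/-- The Ramanujan period function `𝓕₁`. -/
noncomputable def F1 (x : ℂ) : ℂ :=
  (∑' n : ℕ, (digammaC ((n + 1) * x) - Complex.log ((n + 1) * x) + 1 / (2 * (n + 1) * x))) -
    (1 / 2) * ((Real.eulerMascheroniConstant : ℂ) - Complex.log (2 * Real.pi / x))

/-- `J₁(x) = ∫₀^∞ dt / ((1+e^{-t})(1+e^{xt}))`. -/
noncomputable def J1 (x : ℂ) : ℂ :=
  ∫ t in Set.Ioi (0 : ℝ), 1 / ((1 + Complex.exp (-(t : ℂ))) * (1 + Complex.exp (x * t)))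

/-!
Write `C(a, b) = ∫₀^∞ (1 + e^{at})⁻¹ (1 + e^{bt})⁻¹ dt`. Since `(1 + e^{-t})⁻¹ = 1 - (1 + e^t)⁻¹`
and `∫₀^∞ (1 + e^{yt})⁻¹ dt = log 2 / y`, we have `J₁(y) = log 2 / y - C(1, y)`, so the functional
equation is `C(1, 1/x) = x C(1, x)`: the homogeneity `C(ca, cb) = c⁻¹ C(a, b)` plus the symmetry
of `C`. For real `c > 0` homogeneity is the substitution `t ↦ ct`. For complex `c`, expand both
factors as geometric series in `e^{-at}` and `e^{-bt}` and group consecutive terms in pairs. The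
`(k, j)` paired term is `O(t² e^{-((2k+1) Re a + (2j+1) Re b) t})`, so the double series can be
integrated termwise, giving `C(a, b) = ∑ ±(ma + nb)⁻¹` over the blocks
`{2k+1, 2k+2} × {2j+1, 2j+2}`, which is visibly homogeneous of degree `-1`.
-/

open Complex Filter Topology Asymptotics

lemma Complex.one_add_exp_eq (z : ℂ) : 1 + exp z = exp z * (1 + exp (-z)) := by
  rw [mul_add, ← exp_add]
  simp [add_comm]

-- No hypothesis needed: when `exp z = -1` both sides are `0⁻¹ = 0`.
lemma Complex.inv_one_add_exp (z : ℂ) : (1 + exp z)⁻¹ = exp (-z) / (1 + exp (-z)) := by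
  rw [one_add_exp_eq (-z), neg_neg, div_mul_cancel_left₀ (exp_ne_zero _)]

lemma Complex.inv_one_add_exp_neg {z : ℂ} (hz : 1 + exp z ≠ 0) :
    (1 + exp (-z))⁻¹ = 1 - (1 + exp z)⁻¹ := by
  rw [inv_one_add_exp, neg_neg]
  field_simp
  ring

lemma Complex.norm_exp_neg_lt_one {z : ℂ} (hz : 0 < z.re) : ‖exp (-z)‖ < 1 := by
  simpa [norm_exp] using hz

lemma Complex.norm_one_sub_exp_neg_le {z : ℂ} (hz : 0 ≤ z.re) : ‖1 - exp (-z)‖ ≤ 2 * ‖z‖ := by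
  rcases le_or_gt ‖z‖ 1 with hle | hgt
  · simpa [norm_sub_rev] using norm_exp_sub_one_le (x := -z) (by simpa using hle)
  · calc ‖1 - exp (-z)‖ ≤ ‖(1 : ℂ)‖ + ‖exp (-z)‖ := norm_sub_le _ _
      _ ≤ 1 + 1 := by gcongr <;> simp [norm_exp, hz]
      _ ≤ 2 * ‖z‖ := by linarith

lemma Complex.inv_re_pos {z : ℂ} (hz : 0 < z.re) : 0 < z⁻¹.re := by
  rw [inv_re]
  exact div_pos hz (normSq_pos.mpr (ne_zero_of_re_pos hz))

lemma cexp_neg_mul_pow_mul_pow (a b : ℂ) (t : ℝ) (m n : ℕ) :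
    exp (-(a * t)) ^ m * exp (-(b * t)) ^ n = exp (-((m * a + n * b) * t)) := by
  rw [← exp_nat_mul, ← exp_nat_mul, ← exp_add]
  ring_nf

lemma pow_odd_sub_pow_even_eq {R : Type*} [CommRing R] (w : R) (n : ℕ) :
    w ^ (2 * n + 1) - w ^ (2 * n + 2) = (w - w ^ 2) * (w ^ 2) ^ n := by
  ring

section PairedGeometric

variable {𝕜 : Type*} [NormedField 𝕜] {w : 𝕜}

lemma summable_norm_pow_odd_sub_pow_even (hw : ‖w‖ < 1) :
    Summable fun n : ℕ ↦ ‖w ^ (2 * n + 1) - w ^ (2 * n + 2)‖ := by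
  have hw2 : ‖w ^ 2‖ < 1 := by rw [norm_pow]; exact pow_lt_one₀ (norm_nonneg w) hw two_ne_zero
  simpa only [pow_odd_sub_pow_even_eq, norm_mul, norm_pow]
    using (summable_geometric_of_lt_one (norm_nonneg _) hw2).mul_left ‖w - w ^ 2‖

lemma hasSum_pow_odd_sub_pow_even [CompleteSpace 𝕜] (hw : ‖w‖ < 1) :
    HasSum (fun n : ℕ ↦ w ^ (2 * n + 1) - w ^ (2 * n + 2)) (w / (1 + w)) := by
  have hw2 : ‖w ^ 2‖ < 1 := by rw [norm_pow]; exact pow_lt_one₀ (norm_nonneg w) hw two_ne_zero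
  have h1 : 1 - w ^ 2 ≠ 0 := fun h ↦ by simp [← sub_eq_zero.mp h] at hw2
  have h2 : 1 + w ≠ 0 := fun h ↦ by simp [eq_neg_of_add_eq_zero_right h] at hw
  rw [show w / (1 + w) = (w - w ^ 2) * (1 - w ^ 2)⁻¹ by field_simp; ring]
  simpa only [pow_odd_sub_pow_even_eq] using
    (hasSum_geometric_of_norm_lt_one hw2).mul_left (w - w ^ 2)

end PairedGeometric

lemma hasSum_inv_one_add_cexp {z : ℂ} (hz : 0 < z.re) :
    HasSum (fun n : ℕ ↦ exp (-z) ^ (2 * n + 1) - exp (-z) ^ (2 * n + 2)) (1 + exp z)⁻¹ := by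
  rw [inv_one_add_exp]
  exact hasSum_pow_odd_sub_pow_even (norm_exp_neg_lt_one hz)

lemma norm_cexp_neg_pow_odd_sub_pow_even_le {z : ℂ} (hz : 0 ≤ z.re) (n : ℕ) :
    ‖exp (-z) ^ (2 * n + 1) - exp (-z) ^ (2 * n + 2)‖
      ≤ 2 * ‖z‖ * Real.exp (-((2 * n + 1) * z.re)) := by
  rw [show exp (-z) ^ (2 * n + 1) - exp (-z) ^ (2 * n + 2)
      = exp (-z) ^ (2 * n + 1) * (1 - exp (-z)) by ring, norm_mul, norm_pow, norm_exp,
    neg_re, ← Real.exp_nat_mul, mul_comm]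
  push_cast
  gcongr
  · exact norm_one_sub_exp_neg_le hz
  · linarith

def blockDiff {M : Type*} [AddCommGroup M] (f : ℕ → ℕ → M) (p : ℕ × ℕ) : M :=
  f (2 * p.1 + 1) (2 * p.2 + 1) - f (2 * p.1 + 1) (2 * p.2 + 2)
    - f (2 * p.1 + 2) (2 * p.2 + 1) + f (2 * p.1 + 2) (2 * p.2 + 2)

lemma blockDiff_mul {R : Type*} [CommRing R] (u v : ℕ → R) (p : ℕ × ℕ) :
    blockDiff (fun m n ↦ u m * v n) p
      = (u (2 * p.1 + 1) - u (2 * p.1 + 2)) * (v (2 * p.2 + 1) - v (2 * p.2 + 2)) := by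
  simp only [blockDiff]
  ring

lemma blockDiff_congr {M : Type*} [AddCommGroup M] {f g : ℕ → ℕ → M}
    (h : ∀ m n, 0 < m → 0 < n → f m n = g m n) (p : ℕ × ℕ) : blockDiff f p = blockDiff g p := by
  simp only [blockDiff]
  rw [h, h, h, h] <;> omega

section Integral

variable {α E : Type*} [MeasurableSpace α] {μ : Measure α} [NormedAddCommGroup E]
  {f : ℕ → ℕ → α → E}

lemma integrable_blockDiff (hf : ∀ m n, 0 < m → 0 < n → Integrable (f m n) μ) (p : ℕ × ℕ) :
    Integrable (fun x ↦ blockDiff (fun m n ↦ f m n x) p) μ :=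
  (((hf _ _ (by omega) (by omega)).sub (hf _ _ (by omega) (by omega))).sub
    (hf _ _ (by omega) (by omega))).add (hf _ _ (by omega) (by omega))

lemma integral_blockDiff [NormedSpace ℝ E] (hf : ∀ m n, 0 < m → 0 < n → Integrable (f m n) μ)
    (p : ℕ × ℕ) :
    ∫ x, blockDiff (fun m n ↦ f m n x) p ∂μ = blockDiff (fun m n ↦ ∫ x, f m n x ∂μ) p := by
  have h₁ : Integrable (f (2 * p.1 + 1) (2 * p.2 + 1)) μ := hf _ _ (by omega) (by omega)
  have h₂ : Integrable (f (2 * p.1 + 1) (2 * p.2 + 2)) μ := hf _ _ (by omega) (by omega)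
  have h₃ : Integrable (f (2 * p.1 + 2) (2 * p.2 + 1)) μ := hf _ _ (by omega) (by omega)
  have h₄ : Integrable (f (2 * p.1 + 2) (2 * p.2 + 2)) μ := hf _ _ (by omega) (by omega)
  simp only [blockDiff]
  rw [integral_add (by fun_prop) h₄, integral_sub (by fun_prop) h₃, integral_sub h₁ h₂]

end Integral

lemma integrableOn_Ioi_of_isBigO_exp_neg {E : Type*} [NormedAddCommGroup E] {f : ℝ → E}
    {a b : ℝ} (hb : 0 < b) (hf : ContinuousOn f (Ici a))
    (ho : f =O[atTop] fun t ↦ Real.exp (-b * t)) : IntegrableOn f (Ioi a) :=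
  (integrableOn_Ici_iff_integrableOn_Ioi (by finiteness)).mp <|
    (hf.locallyIntegrableOn measurableSet_Ici).integrableOn_of_isBigO_atTop
    ho ⟨Ioi b, Ioi_mem_atTop b, exp_neg_integrableOn_Ioi b hb⟩

lemma integral_cexp_neg_mul_Ioi {c : ℂ} (hc : 0 < c.re) :
    ∫ t in Ioi (0 : ℝ), exp (-(c * t)) = c⁻¹ := by
  simpa [neg_mul, neg_div] using integral_exp_mul_complex_Ioi (a := -c) (by simpa) 0

lemma integrableOn_cexp_neg_mul_Ioi {c : ℂ} (hc : 0 < c.re) :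
    IntegrableOn (fun t : ℝ ↦ exp (-(c * t))) (Ioi 0) := by
  simpa [neg_mul] using integrableOn_exp_mul_complex_Ioi (a := -c) (by simpa) 0

lemma integral_sq_mul_exp_neg_mul_Ioi {c : ℝ} (hc : 0 < c) :
    ∫ t in Ioi (0 : ℝ), t ^ 2 * Real.exp (-(c * t)) = 2 / c ^ 3 := by
  have h := Real.integral_rpow_mul_exp_neg_mul_Ioi (a := 3) (by norm_num) hc
  rw [show (3 : ℝ) = (2 : ℕ) + 1 by norm_num, Real.Gamma_nat_eq_factorial] at h
  simp only [add_sub_cancel_right, Real.rpow_natCast] at h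
  rw [h]
  norm_num
  ring

lemma integrableOn_sq_mul_exp_neg_mul_Ioi {c : ℝ} (hc : 0 < c) :
    IntegrableOn (fun t : ℝ ↦ t ^ 2 * Real.exp (-(c * t))) (Ioi 0) :=
  Integrable.of_integral_ne_zero <| by rw [integral_sq_mul_exp_neg_mul_Ioi hc]; positivity

lemma eight_mul_rpow_three_halves_le {x y : ℝ} (hx : 0 ≤ x) (hy : 0 ≤ y) :
    8 * (x ^ (3 / 2 : ℝ) * y ^ (3 / 2 : ℝ)) ≤ (x + y) ^ 3 := by
  have hgm : √(x * y) ≤ (x + y) / 2 :=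
    Real.sqrt_le_iff.mpr ⟨by positivity, by nlinarith [sq_nonneg (x - y)]⟩
  have hpow : x ^ (3 / 2 : ℝ) * y ^ (3 / 2 : ℝ) = √(x * y) ^ 3 := by
    rw [← Real.mul_rpow hx hy, Real.sqrt_eq_rpow, ← Real.rpow_natCast,
      ← Real.rpow_mul (by positivity)]
    norm_num
  calc 8 * (x ^ (3 / 2 : ℝ) * y ^ (3 / 2 : ℝ)) ≤ 8 * ((x + y) / 2) ^ 3 := by
        rw [hpow]; gcongr
    _ = (x + y) ^ 3 := by ring

lemma summable_inv_odd_mul_add_odd_mul_pow_three {α β : ℝ} (hα : 0 < α) (hβ : 0 < β) :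
    Summable fun p : ℕ × ℕ ↦ (((2 * p.1 + 1) * α + (2 * p.2 + 1) * β) ^ 3)⁻¹ := by
  set μ := min α β
  have hμ : 0 < μ := lt_min hα hβ
  have hf : Summable fun k : ℕ ↦ (((k : ℝ) + 1) ^ (3 / 2 : ℝ))⁻¹ := by
    simpa using (summable_nat_add_iff 1).mpr
      (Real.summable_nat_rpow_inv.mpr (by norm_num : (1 : ℝ) < 3 / 2))
  refine Summable.of_nonneg_of_le (fun p ↦ by positivity) (fun p ↦ ?_)
    ((hf.mul_of_nonneg hf (fun _ ↦ by positivity) (fun _ ↦ by positivity)).mul_left (8 * μ ^ 3)⁻¹)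
  have hlin : μ * ((p.1 + 1) + (p.2 + 1)) ≤ (2 * p.1 + 1) * α + (2 * p.2 + 1) * β := by
    have := min_le_left α β
    have := min_le_right α β
    nlinarith [Nat.cast_nonneg (α := ℝ) p.1, Nat.cast_nonneg (α := ℝ) p.2]
  have hcube : 8 * μ ^ 3 * ((((p.1 : ℝ) + 1) ^ (3 / 2 : ℝ)) * (((p.2 : ℝ) + 1) ^ (3 / 2 : ℝ)))
      ≤ ((2 * p.1 + 1) * α + (2 * p.2 + 1) * β) ^ 3 :=
    calc _ = μ ^ 3 * (8 * ((((p.1 : ℝ) + 1) ^ (3 / 2 : ℝ)) * (((p.2 : ℝ) + 1) ^ (3 / 2 : ℝ)))) := by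
          ring
      _ ≤ μ ^ 3 * (((p.1 : ℝ) + 1) + ((p.2 : ℝ) + 1)) ^ 3 := by
          gcongr; exact eight_mul_rpow_three_halves_le (by positivity) (by positivity)
      _ = (μ * (((p.1 : ℝ) + 1) + ((p.2 : ℝ) + 1))) ^ 3 := by ring
      _ ≤ _ := by gcongr
  rw [← mul_inv, ← mul_inv]
  exact inv_anti₀ (by positivity) hcube

section InvOneAddExp

variable {y : ℂ}

lemma one_add_cexp_neg_mul_mem_slitPlane (hy : 0 < y.re) {t : ℝ} (ht : 0 ≤ t) :
    1 + exp (-(y * t)) ∈ slitPlane := by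
  rcases ht.eq_or_lt with rfl | ht
  · norm_num
  · refine mem_slitPlane_of_norm_lt_one ?_
    rw [norm_exp, Real.exp_lt_one_iff]
    simpa using mul_pos hy ht

lemma one_add_cexp_mul_ne_zero (hy : 0 < y.re) {t : ℝ} (ht : 0 ≤ t) : 1 + exp (y * t) ≠ 0 := by
  rw [one_add_exp_eq]
  exact mul_ne_zero (exp_ne_zero _) (slitPlane_ne_zero (one_add_cexp_neg_mul_mem_slitPlane hy ht))

lemma tendsto_cexp_neg_mul_atTop (hy : 0 < y.re) :
    Tendsto (fun t : ℝ ↦ exp (-(y * t))) atTop (𝓝 0) := by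
  simpa [tendsto_exp_nhds_zero_iff] using tendsto_id.const_mul_atTop hy

lemma continuousOn_inv_one_add_cexp_mul (hy : 0 < y.re) :
    ContinuousOn (fun t : ℝ ↦ (1 + exp (y * t))⁻¹) (Ici 0) :=
  ContinuousOn.inv₀ (by fun_prop) fun _ ht ↦ one_add_cexp_mul_ne_zero hy ht

lemma isBigO_inv_one_add_cexp_mul (hy : 0 < y.re) :
    (fun t : ℝ ↦ (1 + exp (y * t))⁻¹) =O[atTop] fun t ↦ Real.exp (-y.re * t) := by
  have hexp : (fun t : ℝ ↦ exp (-(y * t))) =O[atTop] fun t ↦ Real.exp (-y.re * t) :=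
    isBigO_of_le _ fun t ↦ by simp [norm_exp]
  have hinv : Tendsto (fun t : ℝ ↦ (1 + exp (-(y * t)))⁻¹) atTop (𝓝 1) := by
    simpa using ((tendsto_cexp_neg_mul_atTop hy).const_add 1).inv₀ (by norm_num)
  simp_rw [inv_one_add_exp, div_eq_mul_inv]
  simpa using hexp.mul (hinv.isBigO_one ℝ)

lemma integrableOn_inv_one_add_cexp_mul (hy : 0 < y.re) :
    IntegrableOn (fun t : ℝ ↦ (1 + exp (y * t))⁻¹) (Ioi 0) :=
  integrableOn_Ioi_of_isBigO_exp_neg hy (continuousOn_inv_one_add_cexp_mul hy)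
    (isBigO_inv_one_add_cexp_mul hy)

lemma integral_inv_one_add_cexp_mul (hy : 0 < y.re) :
    ∫ t in Ioi (0 : ℝ), (1 + exp (y * t))⁻¹ = Real.log 2 / y := by
  have hy0 := ne_zero_of_re_pos hy
  have hderiv : ∀ t ∈ Ici (0 : ℝ), HasDerivAt (fun s : ℝ ↦ -log (1 + exp (-(y * s))) / y)
      (1 + exp (y * t))⁻¹ t := by
    intro t ht
    have hslit := one_add_cexp_neg_mul_mem_slitPlane hy ht
    have hinner : HasDerivAt (fun s : ℝ ↦ 1 + exp (-(y * s))) (-y * exp (-(y * t))) t := by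
      simpa [mul_comm] using
        (((hasDerivAt_id (t : ℂ)).const_mul y).neg.cexp.const_add 1).comp_ofReal
    refine (hinner.clog_real hslit).neg.div_const y |>.congr_deriv ?_
    rw [inv_one_add_exp]
    field_simp [slitPlane_ne_zero hslit]
  have hlim : Tendsto (fun s : ℝ ↦ -log (1 + exp (-(y * s))) / y) atTop (𝓝 0) := by
    have hbase : Tendsto (fun s : ℝ ↦ 1 + exp (-(y * s))) atTop (𝓝 1) := by
      simpa using (tendsto_cexp_neg_mul_atTop hy).const_add 1
    simpa using ((continuousAt_clog one_mem_slitPlane).tendsto.comp hbase).neg.div_const y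
  rw [integral_Ioi_of_hasDerivAt_of_tendsto' hderiv (integrableOn_inv_one_add_cexp_mul hy) hlim]
  simp [neg_div, one_add_one_eq_two]

end InvOneAddExp

section CrossIntegral

variable {a b : ℂ}

noncomputable def crossIntegral (a b : ℂ) : ℂ :=
  ∫ t in Ioi (0 : ℝ), (1 + exp (a * t))⁻¹ * (1 + exp (b * t))⁻¹

noncomputable def crossTerm (a b : ℂ) : ℕ × ℕ → ℂ :=
  blockDiff fun m n ↦ ((m : ℂ) * a + n * b)⁻¹

lemma re_natCast_mul_add_natCast_mul_pos (ha : 0 < a.re) (hb : 0 < b.re) {m n : ℕ}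
    (hm : 0 < m) (hn : 0 < n) : 0 < ((m : ℂ) * a + n * b).re := by
  simp only [add_re, mul_re, natCast_re, natCast_im, zero_mul, sub_zero]
  positivity

lemma hasSum_blockDiff_cexp (ha : 0 < a.re) (hb : 0 < b.re) {t : ℝ} (ht : 0 < t) :
    HasSum (blockDiff fun m n : ℕ ↦ exp (-((m * a + n * b) * t)))
      ((1 + exp (a * t))⁻¹ * (1 + exp (b * t))⁻¹) := by
  have hat : 0 < (a * t).re := by simpa using mul_pos ha ht
  have hbt : 0 < (b * t).re := by simpa using mul_pos hb ht
  have hterm : (blockDiff fun m n : ℕ ↦ exp (-((m * a + n * b) * t))) = fun p ↦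
      (exp (-(a * t)) ^ (2 * p.1 + 1) - exp (-(a * t)) ^ (2 * p.1 + 2)) *
        (exp (-(b * t)) ^ (2 * p.2 + 1) - exp (-(b * t)) ^ (2 * p.2 + 2)) := by
    ext p
    simp only [← cexp_neg_mul_pow_mul_pow, blockDiff_mul]
  have hA := hasSum_inv_one_add_cexp hat
  have hB := hasSum_inv_one_add_cexp hbt
  have hnA := summable_norm_pow_odd_sub_pow_even (norm_exp_neg_lt_one hat)
  have hnB := summable_norm_pow_odd_sub_pow_even (norm_exp_neg_lt_one hbt)
  have hs := summable_mul_of_summable_norm hnA hnB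
  have hprod := hA.mul hB hs
  rw [hterm]
  exact hprod

lemma norm_blockDiff_cexp_le (ha : 0 ≤ a.re) (hb : 0 ≤ b.re) (p : ℕ × ℕ) {t : ℝ} (ht : 0 ≤ t) :
    ‖blockDiff (fun m n : ℕ ↦ exp (-((m * a + n * b) * t))) p‖
      ≤ 4 * ‖a‖ * ‖b‖ *
        (t ^ 2 * Real.exp (-(((2 * p.1 + 1) * a.re + (2 * p.2 + 1) * b.re) * t))) := by
  have hA := norm_cexp_neg_pow_odd_sub_pow_even_le (z := a * t)
    (by simpa using mul_nonneg ha ht) p.1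
  have hB := norm_cexp_neg_pow_odd_sub_pow_even_le (z := b * t)
    (by simpa using mul_nonneg hb ht) p.2
  simp only [norm_mul, norm_real, Real.norm_of_nonneg ht, re_mul_ofReal] at hA hB
  simp only [← cexp_neg_mul_pow_mul_pow, blockDiff_mul, norm_mul]
  calc _ ≤ (2 * (‖a‖ * t) * Real.exp (-((2 * p.1 + 1) * (a.re * t))))
        * (2 * (‖b‖ * t) * Real.exp (-((2 * p.2 + 1) * (b.re * t)))) :=
        mul_le_mul hA hB (norm_nonneg _) (by positivity)
    _ = _ := by rw [mul_mul_mul_comm, ← Real.exp_add]; ring_nf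

lemma integral_norm_blockDiff_cexp_le (ha : 0 < a.re) (hb : 0 < b.re) (p : ℕ × ℕ) :
    ∫ t in Ioi (0 : ℝ), ‖blockDiff (fun m n : ℕ ↦ exp (-((m * a + n * b) * t))) p‖
      ≤ 8 * ‖a‖ * ‖b‖ * (((2 * p.1 + 1) * a.re + (2 * p.2 + 1) * b.re) ^ 3)⁻¹ := by
  have hc : 0 < (2 * p.1 + 1) * a.re + (2 * p.2 + 1) * b.re := by positivity
  have hint : ∀ m n : ℕ, 0 < m → 0 < n →
      IntegrableOn (fun t : ℝ ↦ exp (-((m * a + n * b) * t))) (Ioi 0) := fun m n hm hn ↦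
    integrableOn_cexp_neg_mul_Ioi (re_natCast_mul_add_natCast_mul_pos ha hb hm hn)
  refine (setIntegral_mono_on (integrable_blockDiff hint p).norm
    ((integrableOn_sq_mul_exp_neg_mul_Ioi hc).const_mul _) measurableSet_Ioi
    fun t ht ↦ norm_blockDiff_cexp_le ha.le hb.le p (le_of_lt ht)).trans_eq ?_
  rw [integral_const_mul, integral_sq_mul_exp_neg_mul_Ioi hc]
  ring

lemma summable_integral_norm_blockDiff_cexp (ha : 0 < a.re) (hb : 0 < b.re) :
    Summable fun p : ℕ × ℕ ↦
      ∫ t in Ioi (0 : ℝ), ‖blockDiff (fun m n : ℕ ↦ exp (-((m * a + n * b) * t))) p‖ :=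
  .of_nonneg_of_le (fun _ ↦ integral_nonneg fun _ ↦ norm_nonneg _)
    (integral_norm_blockDiff_cexp_le ha hb)
    ((summable_inv_odd_mul_add_odd_mul_pow_three ha hb).mul_left _)

lemma crossIntegral_eq_tsum (ha : 0 < a.re) (hb : 0 < b.re) :
    crossIntegral a b = ∑' p, crossTerm a b p := by
  have hint : ∀ m n : ℕ, 0 < m → 0 < n →
      IntegrableOn (fun t : ℝ ↦ exp (-((m * a + n * b) * t))) (Ioi 0) := fun m n hm hn ↦
    integrableOn_cexp_neg_mul_Ioi (re_natCast_mul_add_natCast_mul_pos ha hb hm hn)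
  calc crossIntegral a b
      = ∫ t in Ioi (0 : ℝ), ∑' p, blockDiff (fun m n : ℕ ↦ exp (-((m * a + n * b) * t))) p :=
        setIntegral_congr_fun measurableSet_Ioi fun t ht ↦
          (hasSum_blockDiff_cexp ha hb ht).tsum_eq.symm
    _ = ∑' p, ∫ t in Ioi (0 : ℝ), blockDiff (fun m n : ℕ ↦ exp (-((m * a + n * b) * t))) p :=
        (integral_tsum_of_summable_integral_norm (integrable_blockDiff hint)
          (summable_integral_norm_blockDiff_cexp ha hb)).symm
    _ = ∑' p, crossTerm a b p := by
        congr 1 with p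
        rw [integral_blockDiff hint, crossTerm]
        exact blockDiff_congr (fun m n hm hn ↦
          integral_cexp_neg_mul_Ioi (re_natCast_mul_add_natCast_mul_pos ha hb hm hn)) p

lemma crossTerm_mul_mul (c a b : ℂ) (p : ℕ × ℕ) :
    crossTerm (c * a) (c * b) p = c⁻¹ * crossTerm a b p := by
  have hscale : ∀ m n : ℂ, (m * (c * a) + n * (c * b))⁻¹ = c⁻¹ * (m * a + n * b)⁻¹ := by
    intro m n
    rw [← mul_inv]
    ring_nf
  simp only [crossTerm, blockDiff, hscale]
  ring

lemma crossIntegral_comm (a b : ℂ) : crossIntegral a b = crossIntegral b a := by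
  simp only [crossIntegral, mul_comm]

lemma crossIntegral_mul_mul {c : ℂ} (ha : 0 < a.re) (hb : 0 < b.re) (hca : 0 < (c * a).re)
    (hcb : 0 < (c * b).re) : crossIntegral (c * a) (c * b) = c⁻¹ * crossIntegral a b := by
  simp only [crossIntegral_eq_tsum hca hcb, crossIntegral_eq_tsum ha hb, crossTerm_mul_mul,
    tsum_mul_left]

lemma crossIntegral_one_inv {x : ℂ} (hx : 0 < x.re) :
    crossIntegral 1 x⁻¹ = x * crossIntegral 1 x := by
  have hx0 := ne_zero_of_re_pos hx
  calc crossIntegral 1 x⁻¹ = crossIntegral (x⁻¹ * x) (x⁻¹ * 1) := by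
        rw [inv_mul_cancel₀ hx0, mul_one]
    _ = x * crossIntegral 1 x := by
        rw [crossIntegral_mul_mul hx (by norm_num) (by simp [hx0])
          (by rw [mul_one]; exact inv_re_pos hx), inv_inv, crossIntegral_comm]

lemma integrableOn_crossIntegrand (ha : 0 < a.re) (hb : 0 < b.re) :
    IntegrableOn (fun t : ℝ ↦ (1 + exp (a * t))⁻¹ * (1 + exp (b * t))⁻¹) (Ioi 0) := by
  refine integrableOn_Ioi_of_isBigO_exp_neg (add_pos ha hb)
    ((continuousOn_inv_one_add_cexp_mul ha).mul (continuousOn_inv_one_add_cexp_mul hb)) ?_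
  refine ((isBigO_inv_one_add_cexp_mul ha).mul (isBigO_inv_one_add_cexp_mul hb)).congr_right ?_
  intro t
  rw [← Real.exp_add]
  ring_nf

end CrossIntegral

lemma J1_eq {y : ℂ} (hy : 0 < y.re) : J1 y = Real.log 2 / y - crossIntegral 1 y := by
  have hsplit : ∀ t : ℝ, 1 / ((1 + exp (-(t : ℂ))) * (1 + exp (y * t)))
      = (1 + exp (y * t))⁻¹ - (1 + exp (1 * t))⁻¹ * (1 + exp (y * t))⁻¹ := by
    intro t
    have ht : 1 + exp (t : ℂ) ≠ 0 := by
      rw [← ofReal_exp, ← ofReal_one, ← ofReal_add, ofReal_ne_zero]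
      positivity
    rw [one_div, mul_inv, inv_one_add_exp_neg ht, one_mul]
    ring
  simp only [J1, hsplit]
  rw [integral_sub (integrableOn_inv_one_add_cexp_mul hy)
    (integrableOn_crossIntegrand (by norm_num) hy), integral_inv_one_add_cexp_mul hy, crossIntegral]

theorem J1_two_term_functional_equation (x : ℂ) (hx : 0 < x.re) :
    (J1 x + Real.log 2) - (1 / x) * (J1 (1 / x) + Real.log 2) = 0 := by
  have hx0 := ne_zero_of_re_pos hx
  rw [one_div, J1_eq hx, J1_eq (inv_re_pos hx), crossIntegral_one_inv hx]
  field_simp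
  ring
end

section
/- For Re(s) > 2 and x > 0, the function A(x,s) := ∫₀^∞ t^{s−1}/((e^{xt}−1)(e^t−1)) dt satisfies A(x,s) = x^{1−s}Γ(s−1)ζ(s−1) − (1/2)x^{−s}Γ(s)ζ(s) + ∫₀^∞ (1/(e^t−1) − 1/t + 1/2)·t^{s−1}/(e^{xt}−1) dt. -/
/-!
On `(0, ∞)` the integrand splits as
`(1/(eᵗ-1) - 1/t + 1/2) t^(s-1)/(e^(xt)-1) + t^(s-2)/(e^(xt)-1) - ½ t^(s-1)/(e^(xt)-1)`.
The last two terms are Mellin transforms of `1/(e^(xt)-1) = ∑ₙ e^(-(n+1)xt)`, and integrating the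
series termwise gives `x^(-z) Γ(z) ζ(z)` for `Re z > 1`. The integrand itself is integrable because
`t/(eᵗ-1) ≤ 1`, so it is dominated by `t^(s-2)/(e^(xt)-1)`.
-/

open MeasureTheory Set Filter Asymptotics Real

lemma hasSum_exp_neg_nat_succ_mul {t : ℝ} (ht : 0 < t) :
    HasSum (fun n : ℕ ↦ rexp (-(n + 1) * t)) (1 / (rexp t - 1)) := by
  have hr : rexp (-t) < 1 := Real.exp_lt_one_iff.mpr (by linarith)
  have hsub : rexp t - 1 ≠ 0 := by linarith [Real.add_one_lt_exp ht.ne']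
  have hval : 1 / (rexp t - 1) = rexp (-t) * (1 - rexp (-t))⁻¹ := by
    rw [Real.exp_neg]
    field_simp
  rw [hval]
  refine ((hasSum_geometric_of_lt_one (exp_pos (-t)).le hr).mul_left (rexp (-t))).congr_fun
    fun n ↦ ?_
  rw [← Real.exp_nat_mul, ← Real.exp_add]
  ring_nf

lemma one_div_exp_sub_one_le_inv {t : ℝ} (ht : 0 < t) : 1 / (rexp t - 1) ≤ t⁻¹ := by
  rw [one_div]
  exact inv_anti₀ ht (by linarith [Real.add_one_le_exp t])

lemma one_div_exp_sub_one_le_two_mul_exp_neg {t : ℝ} (ht : 1 ≤ t) :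
    1 / (rexp t - 1) ≤ 2 * rexp (-t) := by
  have h2 : 2 ≤ rexp t := by linarith [Real.add_one_le_exp t]
  rw [Real.exp_neg, div_le_iff₀ (by linarith)]
  field_simp
  linarith

lemma ofReal_one_div_exp_sub_one (t : ℝ) :
    ((1 / (rexp t - 1) : ℝ) : ℂ) = 1 / (Complex.exp t - 1) := by
  push_cast [Complex.ofReal_exp]
  rfl

lemma mellinConvergent_one_div_exp_sub_one {z : ℂ} (hz : 1 < z.re) :
    MellinConvergent (fun t : ℝ ↦ 1 / (Complex.exp t - 1)) z := by
  have hnorm : ∀ t : ℝ, 0 < t → ‖1 / (Complex.exp t - 1)‖ = 1 / (rexp t - 1) := fun t ht ↦ by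
    rw [← ofReal_one_div_exp_sub_one, Complex.norm_real, Real.norm_of_nonneg]
    exact one_div_nonneg.mpr (by linarith [Real.add_one_lt_exp ht.ne'])
  refine mellinConvergent_of_isBigO_rpow_exp one_pos ?_ ?_ ?_ hz
  · refine ContinuousOn.locallyIntegrableOn (fun t (ht : 0 < t) ↦ ?_) measurableSet_Ioi
    have : Complex.exp t - 1 ≠ 0 := by
      rw [sub_ne_zero, ← Complex.ofReal_exp, ← Complex.ofReal_one, Ne, Complex.ofReal_inj]
      exact (Real.one_lt_exp_iff.mpr ht).ne'
    fun_prop (disch := assumption)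
  · refine IsBigO.of_bound 2 ?_
    filter_upwards [eventually_ge_atTop 1] with t ht
    rw [hnorm t (by linarith), Real.norm_of_nonneg (exp_pos _).le, neg_one_mul]
    exact one_div_exp_sub_one_le_two_mul_exp_neg ht
  · refine IsBigO.of_bound 1 ?_
    filter_upwards [self_mem_nhdsWithin] with t (ht : 0 < t)
    rw [hnorm t ht, Real.norm_of_nonneg (by positivity), Real.rpow_neg_one, one_mul]
    exact one_div_exp_sub_one_le_inv ht

lemma mellin_one_div_exp_sub_one {z : ℂ} (hz : 1 < z.re) :
    mellin (fun t : ℝ ↦ 1 / (Complex.exp t - 1)) z = Complex.Gamma z * riemannZeta z := by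
  have hF : ∀ t ∈ Ioi (0 : ℝ), HasSum (fun n : ℕ ↦ (1 : ℂ) * rexp (-((n : ℝ) + 1) * t))
      (1 / (Complex.exp t - 1)) := fun t ht ↦ by
    simpa [← ofReal_one_div_exp_sub_one] using
      Complex.hasSum_ofReal.mpr (hasSum_exp_neg_nat_succ_mul ht)
  have hsum : Summable fun n : ℕ ↦ ‖(1 : ℂ)‖ / ((n : ℝ) + 1) ^ z.re :=
    ((Real.summable_one_div_nat_add_rpow 1 z.re).mpr hz).congr fun n ↦ by
      rw [norm_one, abs_of_pos (by positivity)]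
  have hmellin := (hasSum_mellin (fun _ ↦ Or.inr (by positivity)) (by linarith) hF hsum).tsum_eq
  rw [← hmellin, zeta_eq_tsum_one_div_nat_add_one_cpow hz, ← tsum_mul_left]
  congr 1 with n
  push_cast
  ring

lemma hasMellin_one_div_exp_mul_sub_one {x : ℝ} (hx : 0 < x) {z : ℂ} (hz : 1 < z.re) :
    HasMellin (fun t : ℝ ↦ 1 / (Complex.exp (x * t) - 1)) z
      (x ^ (-z) * Complex.Gamma z * riemannZeta z) := by
  have hcomp : (fun t : ℝ ↦ 1 / (Complex.exp (x * t) - 1)) =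
      fun t ↦ (fun u : ℝ ↦ 1 / (Complex.exp u - 1)) (x * t) := by
    ext t
    push_cast
    rfl
  rw [hcomp, mul_assoc]
  exact ⟨(MellinConvergent.comp_mul_left hx).mpr (mellinConvergent_one_div_exp_sub_one hz),
    by rw [mellin_comp_mul_left (fun u : ℝ ↦ 1 / (Complex.exp u - 1)) z hx,
      mellin_one_div_exp_sub_one hz, smul_eq_mul]⟩

lemma integrableOn_cpow_div_exp_mul_sub_one {x : ℝ} (hx : 0 < x) {z : ℂ} (hz : 1 < z.re) :
    IntegrableOn (fun t : ℝ ↦ (t : ℂ) ^ (z - 1) / (Complex.exp (x * t) - 1)) (Ioi 0) := by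
  simpa only [MellinConvergent, smul_eq_mul, mul_one_div] using
    (hasMellin_one_div_exp_mul_sub_one hx hz).1

lemma integral_cpow_div_exp_mul_sub_one {x : ℝ} (hx : 0 < x) {z : ℂ} (hz : 1 < z.re) :
    ∫ t in Ioi (0 : ℝ), (t : ℂ) ^ (z - 1) / (Complex.exp (x * t) - 1) =
      x ^ (-z) * Complex.Gamma z * riemannZeta z := by
  simpa only [mellin, smul_eq_mul, mul_one_div] using (hasMellin_one_div_exp_mul_sub_one hx hz).2

lemma norm_div_exp_sub_one_le_one {t : ℝ} (ht : 0 < t) :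
    ‖(t : ℂ) / (Complex.exp t - 1)‖ ≤ 1 := by
  have hsub : 0 < rexp t - 1 := by linarith [Real.add_one_lt_exp ht.ne']
  rw [div_eq_mul_one_div, ← ofReal_one_div_exp_sub_one, ← Complex.ofReal_mul, Complex.norm_real,
    Real.norm_of_nonneg (by positivity), ← div_eq_mul_one_div, div_le_one hsub]
  linarith [Real.add_one_le_exp t]

lemma integrableOn_cpow_div_exp_mul_sub_one_mul_exp_sub_one {x : ℝ} (hx : 0 < x) {s : ℂ}
    (hs : 2 < s.re) :
    IntegrableOn (fun t : ℝ ↦ (t : ℂ) ^ (s - 1) / ((Complex.exp (x * t) - 1) * (Complex.exp t - 1)))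
      (Ioi 0) := by
  have hs₁ : 1 < (s - 1).re := by simp only [Complex.sub_re, Complex.one_re]; linarith
  have hbdd := (integrableOn_cpow_div_exp_mul_sub_one hx hs₁).mul_bdd (c := 1)
    (Measurable.aestronglyMeasurable (by fun_prop))
    (ae_restrict_of_forall_mem measurableSet_Ioi fun t ↦ norm_div_exp_sub_one_le_one)
  refine IntegrableOn.congr_fun hbdd (fun t (ht : 0 < t) ↦ ?_) measurableSet_Ioi
  have ht₀ : (t : ℂ) ≠ 0 := Complex.ofReal_ne_zero.mpr ht.ne'
  rw [Complex.cpow_sub (s - 1) 1 ht₀, Complex.cpow_one]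
  field_simp

lemma one_div_exp_sub_one_sub_inv_add_half_mul_eq (x : ℝ) {t : ℝ} (ht : t ≠ 0) (s : ℂ) :
    (1 / (Complex.exp t - 1) - 1 / (t : ℂ) + 1 / 2) *
        ((t : ℂ) ^ (s - 1) / (Complex.exp (x * t) - 1)) =
      (t : ℂ) ^ (s - 1) / ((Complex.exp (x * t) - 1) * (Complex.exp t - 1)) -
        (t : ℂ) ^ (s - 1 - 1) / (Complex.exp (x * t) - 1) +
        1 / 2 * ((t : ℂ) ^ (s - 1) / (Complex.exp (x * t) - 1)) := by
  rw [Complex.cpow_sub (s - 1) 1 (Complex.ofReal_ne_zero.mpr ht), Complex.cpow_one, ← div_div]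
  ring

theorem A_integral_decomposition (x : ℝ) (hx : 0 < x) (s : ℂ) (hs : 2 < s.re) :
    (∫ t in Set.Ioi (0 : ℝ),
        (t : ℂ) ^ (s - 1) / ((Complex.exp (x * t) - 1) * (Complex.exp t - 1))) =
      (x : ℂ) ^ (1 - s) * Complex.Gamma (s - 1) * riemannZeta (s - 1) -
        (1 / 2) * (x : ℂ) ^ (-s) * Complex.Gamma s * riemannZeta s +
        ∫ t in Set.Ioi (0 : ℝ),
          (1 / (Complex.exp t - 1) - 1 / (t : ℂ) + 1 / 2) *
            ((t : ℂ) ^ (s - 1) / (Complex.exp (x * t) - 1)) := by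
  have hs₁ : 1 < (s - 1).re := by simp only [Complex.sub_re, Complex.one_re]; linarith
  have hs₀ : 1 < s.re := by linarith
  have hA := integrableOn_cpow_div_exp_mul_sub_one_mul_exp_sub_one hx hs
  have h₁ := integrableOn_cpow_div_exp_mul_sub_one hx hs₁
  have h₀ := integrableOn_cpow_div_exp_mul_sub_one hx hs₀
  rw [setIntegral_congr_fun measurableSet_Ioi
      fun t ht ↦ one_div_exp_sub_one_sub_inv_add_half_mul_eq x (ne_of_gt ht) s,
    integral_add ?_ (h₀.const_mul _), integral_sub hA h₁, integral_const_mul,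
    integral_cpow_div_exp_mul_sub_one hx hs₁, integral_cpow_div_exp_mul_sub_one hx hs₀,
    neg_sub]
  · ring
  · exact hA.sub h₁
end
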